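/- arXiv:2509.17402 — 2 statements merged into one kernel-verified Lean document; each statement's English description precedes it below -/
import Mathlib

section
/- Let n ≥ 1, let H : ℝⁿ × ℝⁿ → ℝ be a Tonelli Hamiltonian and L(x,v) = sup_{p∈ℝⁿ}(⟨v,p⟩ − H(x,p)) its associated Lagrangian. Let λ, ε ∈ (0,1], let x₀ ∈ ℝⁿ, let u be a classical solution of the viscous discounted equation λu + H(x, Du) = εΔu, and let θ be a weak adjoint density for u at x₀ (with parameters λ, ε). Then ∫_{[0,1)ⁿ} L(x, ∂H/∂p(x, Du(x))) θ(x) dx = λ u(x₀). -/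
open MeasureTheory Real Filter
open scoped RealInnerProductSpace

noncomputable section

/-- Euclidean space ℝⁿ. -/
abbrev Em (n : ℕ) := EuclideanSpace ℝ (Fin n)

/-- The integer vector k ∈ ℤⁿ as an element of ℝⁿ. -/
def intVec {n : ℕ} (k : Fin n → ℤ) : Em n := WithLp.toLp 2 (fun i => (k i : ℝ))

/-- ℤⁿ-periodicity of a real-valued function on ℝⁿ. -/
def ZPeriodic {n : ℕ} (u : Em n → ℝ) : Prop :=
  ∀ (x : Em n) (k : Fin n → ℤ), u (x + intVec k) = u x

/-- ℤⁿ-periodicity of a vector field on ℝⁿ. -/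
def ZPeriodicV {n : ℕ} (b : Em n → Em n) : Prop :=
  ∀ (x : Em n) (k : Fin n → ℤ), b (x + intVec k) = b x

/-- The fundamental domain [0,1)ⁿ of the torus ℝⁿ/ℤⁿ. -/
def cube (n : ℕ) : Set (Em n) := {x | ∀ i, x i ∈ Set.Ico (0:ℝ) 1}

/-- The Laplacian of u, as the trace of the second derivative. -/
def lap {n : ℕ} (u : Em n → ℝ) (x : Em n) : ℝ :=
  ∑ i, iteratedFDeriv ℝ 2 u x ![EuclideanSpace.single i 1, EuclideanSpace.single i 1]

/-- The (i,j) entry of the Hessian matrix of u at x. -/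
def hess {n : ℕ} (u : Em n → ℝ) (x : Em n) (i j : Fin n) : ℝ :=
  iteratedFDeriv ℝ 2 u x ![EuclideanSpace.single i 1, EuclideanSpace.single j 1]

/-- The squared Frobenius norm |D²u(x)|² of the Hessian of u at x. -/
def hessSq {n : ℕ} (u : Em n → ℝ) (x : Em n) : ℝ :=
  ∑ i, ∑ j, (hess u x i j)^2

/-- Divergence of a vector field. -/
def diver {n : ℕ} (V : Em n → Em n) (x : Em n) : ℝ :=
  ∑ i, fderiv ℝ (fun y => V y i) x (EuclideanSpace.single i 1)

/-- Partial gradient ∂H/∂p of H(x,p) in the second variable. -/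
def Hp {n : ℕ} (H : Em n × Em n → ℝ) (x p : Em n) : Em n :=
  gradient (fun q => H (x, q)) p

/-- Partial gradient ∂H/∂x of H(x,p) in the first variable. -/
def Hx {n : ℕ} (H : Em n × Em n → ℝ) (x p : Em n) : Em n :=
  gradient (fun y => H (y, p)) x

/-- A Tonelli Hamiltonian: C², ℤⁿ-periodic in x, positive definite Hessian in p,
uniformly superlinear in p. -/
structure Tonelli {n : ℕ} (H : Em n × Em n → ℝ) : Prop where
  smooth : ContDiff ℝ 2 H
  periodic : ∀ (x p : Em n) (k : Fin n → ℤ), H (x + intVec k, p) = H (x, p)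
  posdef : ∀ (x p v : Em n), v ≠ 0 →
    0 < iteratedFDeriv ℝ 2 (fun q => H (x, q)) p ![v, v]
  superlinear : ∀ A : ℝ, ∃ R : ℝ, ∀ (x p : Em n), R ≤ ‖p‖ → A * ‖p‖ ≤ H (x, p)

/-- A classical (ℤⁿ-periodic, C²) solution of λu + H(x,Du) = εΔu. -/
def ClassicalSol {n : ℕ} (H : Em n × Em n → ℝ) (lam eps : ℝ) (u : Em n → ℝ) : Prop :=
  ContDiff ℝ 2 u ∧ ZPeriodic u ∧
    ∀ x, lam * u x + H (x, gradient u x) = eps * lap u x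

/-- A ℤⁿ-periodic continuous viscosity solution of λu + H(x,Du) = 0. -/
def ViscositySol {n : ℕ} (H : Em n × Em n → ℝ) (lam : ℝ) (u : Em n → ℝ) : Prop :=
  Continuous u ∧ ZPeriodic u ∧
  ∀ φ : Em n → ℝ, ContDiff ℝ 1 φ →
    (∀ x, IsLocalMax (fun y => u y - φ y) x → lam * u x + H (x, gradient φ x) ≤ 0) ∧
    (∀ x, IsLocalMin (fun y => u y - φ y) x → 0 ≤ lam * u x + H (x, gradient φ x))

/-- A weak adjoint density for u at x₀ with parameters λ, ε. -/
def AdjointDensity {n : ℕ} (H : Em n × Em n → ℝ) (lam eps : ℝ) (u : Em n → ℝ)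
    (x₀ : Em n) (θ : Em n → ℝ) : Prop :=
  ZPeriodic θ ∧ (∀ x, 0 ≤ θ x) ∧ IntegrableOn θ (cube n) ∧
  (∫ x in cube n, θ x) = 1 ∧
  ∀ ψ : Em n → ℝ, ContDiff ℝ 2 ψ → ZPeriodic ψ →
    (∫ x in cube n, (⟪gradient ψ x, Hp H x (gradient u x)⟫ - eps * lap ψ x) * θ x)
      = lam * ψ x₀ - lam * ∫ x in cube n, ψ x * θ x

/-- The Lagrangian associated to H by Legendre transform. -/
def Lag {n : ℕ} (H : Em n × Em n → ℝ) (x v : Em n) : ℝ :=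
  ⨆ p : Em n, (⟪v, p⟫ - H (x, p))

/-!
At `v = ∂H/∂p(x, Du(x))` the supremum defining `L(x, v)` is attained at `p = Du(x)`, because
`H(x, ·)` is convex and so lies above its tangent hyperplane at `Du(x)`. Hence
`L(x, ∂H/∂p(x, Du)) = ⟨Du, ∂H/∂p(x, Du)⟩ - H(x, Du) = ⟨Du, ∂H/∂p(x, Du)⟩ - εΔu + λu`
pointwise, and integrating against `θ` while testing the adjoint equation with `ψ = u` leaves
`λ u(x₀)`.
-/

section TangentBound

variable {E : Type*} [NormedAddCommGroup E] [NormedSpace ℝ E] {g : E → ℝ}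

theorem hasDerivAt_add_smul (p w : E) (t : ℝ) : HasDerivAt (fun s : ℝ => p + s • w) w t := by
  simpa using ((hasDerivAt_id t).smul_const w).const_add p

theorem hasDerivAt_fderiv_apply_add_smul (hg : ContDiff ℝ 2 g) (p w : E) (t : ℝ) :
    HasDerivAt (fun s : ℝ => fderiv ℝ g (p + s • w) w)
      (iteratedFDeriv ℝ 2 g (p + t • w) ![w, w]) t := by
  have hD2 : HasDerivAt (fun s : ℝ => fderiv ℝ g (p + s • w))
      (fderiv ℝ (fderiv ℝ g) (p + t • w) w) t :=
    (((hg.fderiv_right (m := 1) le_rfl).differentiable one_ne_zero) _).hasFDerivAt.comp_hasDerivAt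
      t (hasDerivAt_add_smul p w t)
  rw [iteratedFDeriv_two_apply]
  simpa using hD2.clm_apply (hasDerivAt_const t w)

/-- On the segment from `p` to `q` the slope of `g` is monotone, so by the mean value theorem
`g q - g p` is at least the slope at `p`. -/
theorem add_fderiv_sub_le_of_iteratedFDeriv_two_nonneg (hg : ContDiff ℝ 2 g)
    (hpos : ∀ y w, 0 ≤ iteratedFDeriv ℝ 2 g y ![w, w]) (p q : E) :
    g p + fderiv ℝ g p (q - p) ≤ g q := by
  set w := q - p
  set slopeAt : ℝ → ℝ := fun s => fderiv ℝ g (p + s • w) w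
  have hφ : ∀ t : ℝ, HasDerivAt (fun s => g (p + s • w)) (slopeAt t) t := fun t =>
    ((hg.differentiable two_ne_zero) _).hasFDerivAt.comp_hasDerivAt t (hasDerivAt_add_smul p w t)
  have hmono : Monotone slopeAt :=
    monotone_of_deriv_nonneg
      (fun t => (hasDerivAt_fderiv_apply_add_smul hg p w t).differentiableAt)
      fun t => (hasDerivAt_fderiv_apply_add_smul hg p w t).deriv ▸ hpos _ _
  obtain ⟨t, ht, hslope⟩ := exists_hasDerivAt_eq_slope (fun s => g (p + s • w)) slopeAt one_pos
    (fun s _ => (hφ s).continuousAt.continuousWithinAt) (fun s _ => hφ s)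
  have h0t : slopeAt 0 ≤ slopeAt t := hmono ht.1.le
  simp only [slopeAt, hslope, zero_smul, add_zero, one_smul, w, add_sub_cancel, sub_zero,
    div_one] at h0t
  linarith

end TangentBound

section InnerProductSpace

variable {E : Type*} [NormedAddCommGroup E] [InnerProductSpace ℝ E] [CompleteSpace E]

theorem iSup_inner_gradient_sub_eq {g : E → ℝ} (hg : ContDiff ℝ 2 g)
    (hpos : ∀ y w, 0 ≤ iteratedFDeriv ℝ 2 g y ![w, w]) (p : E) :
    ⨆ q, (⟪gradient g p, q⟫ - g q) = ⟪gradient g p, p⟫ - g p := by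
  have hle : ∀ q, ⟪gradient g p, q⟫ - g q ≤ ⟪gradient g p, p⟫ - g p := fun q => by
    have h := add_fderiv_sub_le_of_iteratedFDeriv_two_nonneg hg hpos p q
    rw [← inner_gradient_left, inner_sub_right] at h
    linarith
  exact le_antisymm (ciSup_le hle) (le_ciSup ⟨_, Set.forall_mem_range.2 hle⟩ p)

theorem ContDiff.continuous_gradient {u : E → ℝ} {k : WithTop ℕ∞} (hu : ContDiff ℝ k u)
    (hk : k ≠ 0) : Continuous (gradient u) :=
  (InnerProductSpace.toDual ℝ E).symm.continuous.comp (hu.continuous_fderiv hk)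

end InnerProductSpace

namespace Tonelli

variable {n : ℕ} {H : Em n × Em n → ℝ}

theorem iteratedFDeriv_two_nonneg (hH : Tonelli H) (x p v : Em n) :
    0 ≤ iteratedFDeriv ℝ 2 (fun q => H (x, q)) p ![v, v] := by
  rcases eq_or_ne v 0 with rfl | hv
  · have hzero : (![0, 0] : Fin 2 → Em n) = 0 := by
      ext i; fin_cases i <;> rfl
    rw [hzero, ContinuousMultilinearMap.map_zero]
  · exact (hH.posdef x p v hv).le

theorem lag_Hp (hH : Tonelli H) (x p : Em n) :
    Lag H x (Hp H x p) = ⟪Hp H x p, p⟫ - H (x, p) :=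
  iSup_inner_gradient_sub_eq (hH.smooth.comp (contDiff_prodMk_right x))
    (hH.iteratedFDeriv_two_nonneg x) p

theorem Hp_eq_toDual_symm (hH : Tonelli H) (x p : Em n) :
    Hp H x p = (InnerProductSpace.toDual ℝ (Em n)).symm
      ((fderiv ℝ H (x, p)).comp (ContinuousLinearMap.inr ℝ (Em n) (Em n))) := by
  have hpartial := ((hH.smooth.differentiable two_ne_zero) (x, p)).hasFDerivAt.comp p
    (hasFDerivAt_prodMk_right x p)
  exact congrArg _ hpartial.fderiv

theorem continuous_Hp (hH : Tonelli H) {G : Em n → Em n} (hG : Continuous G) :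
    Continuous fun x => Hp H x (G x) := by
  simp_rw [hH.Hp_eq_toDual_symm]
  exact (InnerProductSpace.toDual ℝ (Em n)).symm.continuous.comp
    (((hH.smooth.continuous_fderiv two_ne_zero).comp (continuous_id.prodMk hG)).clm_comp
      continuous_const)

end Tonelli

section Cube

variable (n : ℕ)

theorem cube_eq_preimage :
    cube n = EuclideanSpace.equiv (Fin n) ℝ ⁻¹' Set.univ.pi fun _ => Set.Ico 0 1 := by
  ext x; simp [cube]

theorem measurableSet_cube : MeasurableSet (cube n) := by
  rw [cube_eq_preimage]
  exact (EuclideanSpace.equiv (Fin n) ℝ).continuous.measurable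
    (MeasurableSet.univ_pi fun _ => measurableSet_Ico)

theorem exists_isCompact_superset_cube : ∃ K, IsCompact K ∧ cube n ⊆ K := by
  refine ⟨EuclideanSpace.equiv (Fin n) ℝ ⁻¹' Set.univ.pi fun _ => Set.Icc 0 1,
    (EuclideanSpace.equiv (Fin n) ℝ).toHomeomorph.isCompact_preimage.2
      (isCompact_univ_pi fun _ => isCompact_Icc), ?_⟩
  rw [cube_eq_preimage]
  exact Set.preimage_mono (Set.pi_mono fun _ _ => Set.Ico_subset_Icc_self)

variable {n}

theorem integrableOn_cube_continuous_mul {f θ : Em n → ℝ} (hf : Continuous f)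
    (hθ : IntegrableOn θ (cube n)) : IntegrableOn (fun x => f x * θ x) (cube n) := by
  obtain ⟨K, hK, hcube⟩ := exists_isCompact_superset_cube n
  exact hθ.continuousOn_mul_of_subset hf.continuousOn hK (measurableSet_cube n) hcube

end Cube

theorem adjoint_lagrangian_identity_general
    (n : ℕ) (H : Em n × Em n → ℝ) (hH : Tonelli H)
    (lam eps : ℝ)
    (x₀ : Em n) (u : Em n → ℝ) (hu : ClassicalSol H lam eps u)
    (θ : Em n → ℝ) (hθ : AdjointDensity H lam eps u x₀ θ) :
    (∫ x in cube n, Lag H x (Hp H x (gradient u x)) * θ x) = lam * u x₀ := by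
  obtain ⟨hu2, hup, hsol⟩ := hu
  obtain ⟨-, -, hθint, -, hadj⟩ := hθ
  have hDu : Continuous (gradient u) := hu2.continuous_gradient two_ne_zero
  have hlag : ∀ x, Lag H x (Hp H x (gradient u x)) =
      (⟪gradient u x, Hp H x (gradient u x)⟫ - eps * lap u x) + lam * u x := fun x => by
    rw [hH.lag_Hp, real_inner_comm]
    linarith [hsol x]
  have hlagθ : IntegrableOn (fun x => Lag H x (Hp H x (gradient u x)) * θ x) (cube n) := by
    refine integrableOn_cube_continuous_mul ?_ hθint
    simp_rw [hH.lag_Hp]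
    exact ((hH.continuous_Hp hDu).inner hDu).sub
      (hH.smooth.continuous.comp (continuous_id.prodMk hDu))
  have huθ : IntegrableOn (fun x => u x * θ x) (cube n) :=
    integrableOn_cube_continuous_mul hu2.continuous hθint
  have hadjU := hadj u hu2 hup
  have hintegrand : (fun x => (⟪gradient u x, Hp H x (gradient u x)⟫ - eps * lap u x) * θ x) =
      fun x => Lag H x (Hp H x (gradient u x)) * θ x - lam * (u x * θ x) := by
    funext x
    rw [hlag]
    ring
  rw [hintegrand, integral_sub hlagθ (huθ.const_mul lam), integral_const_mul] at hadjU
  linarith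

theorem adjoint_lagrangian_identity
    (n : ℕ) (hn : 1 ≤ n) (H : Em n × Em n → ℝ) (hH : Tonelli H)
    (lam eps : ℝ) (hlam : lam ∈ Set.Ioc (0:ℝ) 1) (heps : eps ∈ Set.Ioc (0:ℝ) 1)
    (x₀ : Em n) (u : Em n → ℝ) (hu : ClassicalSol H lam eps u)
    (θ : Em n → ℝ) (hθ : AdjointDensity H lam eps u x₀ θ) :
    (∫ x in cube n, Lag H x (Hp H x (gradient u x)) * θ x) = lam * u x₀ :=
  adjoint_lagrangian_identity_general n H hH lam eps x₀ u hu θ hθ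

end
end

section
/- Let n ≥ 1 and let H : ℝⁿ × ℝⁿ → ℝ be a Tonelli Hamiltonian. Then there exists a constant C₄ > 0, depending only on H, such that for all λ, ε ∈ (0,1], if u^ε is a classical solution of the viscous discounted equation λu^ε + H(x, Du^ε) = εΔu^ε and u_λ is a ℤⁿ-periodic continuous viscosity solution of λu_λ + H(x, Du_λ) = 0, then sup_{x∈ℝⁿ} |u^ε(x) − u_λ(x)| ≤ C₄ √ε / λ. -/
open MeasureTheory Real Filter
open scoped RealInnerProductSpace

noncomputable section

/-!
Doubling of variables. The viscosity solution `u_λ` is Lipschitz with a constant `K` that depends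
only on `H`: testing it from above with a smoothed cone of slope `K`, superlinearity of `H` forces
the maximum point to lie near the vertex. One then maximises `u^ε(x) - u_λ(y) - ‖x - y‖² / √ε` (and
the symmetric quantity) and compares the two equations at the maximum point, where both see the
gradient `p = 2 (x - y) / √ε`. The Lipschitz bound gives `‖x - y‖ ≤ K √ε`, so `‖p‖ ≤ 2K` and the
`x`-dependence of `H` costs at most `M K √ε`, `M` being its `x`-Lipschitz constant on that ball;
the paraboloid bounds `ε Δu^ε` by `2 n √ε`. Hence `λ |u^ε - u_λ| ≤ (2n + M K) √ε`.
-/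

open scoped NNReal Topology

theorem IsLocalMax.deriv_deriv_nonpos {f : ℝ → ℝ} {x₀ : ℝ} (h : IsLocalMax f x₀)
    (hc : ContinuousAt f x₀) : deriv (deriv f) x₀ ≤ 0 := by
  by_contra! hpos
  -- the second-derivative test would make `x₀` a local minimum too, so `f` is locally constant
  have hmin := isLocalMin_of_deriv_deriv_pos hpos h.deriv_eq_zero hc
  have hconst : f =ᶠ[𝓝 x₀] fun _ => f x₀ := by
    filter_upwards [h, hmin] with y h₁ h₂ using le_antisymm h₁ h₂
  have hderiv : deriv f =ᶠ[𝓝 x₀] fun _ => 0 := by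
    filter_upwards [hconst.eventuallyEq_nhds] with y hy
    rw [hy.deriv_eq, deriv_const]
  rw [hderiv.deriv_eq, deriv_const] at hpos
  exact lt_irrefl _ hpos

section SecondOrder

variable {E : Type*} [NormedAddCommGroup E] [NormedSpace ℝ E] {g : E → ℝ} {x : E}

theorem IsLocalMax.iteratedFDeriv_two_nonpos (h : IsLocalMax g x) (hg : ContDiff ℝ 2 g)
    (v : E) : iteratedFDeriv ℝ 2 g x ![v, v] ≤ 0 := by
  have hline : ∀ t : ℝ, HasDerivAt (fun s : ℝ => x + s • v) v t := fun t => by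
    simpa using ((hasDerivAt_id t).smul_const v).const_add x
  have hg1 : Differentiable ℝ g := hg.differentiable two_ne_zero
  have hg2 : Differentiable ℝ (fderiv ℝ g) :=
    (hg.fderiv_right (le_refl _)).differentiable one_ne_zero
  have hderiv : deriv (fun t : ℝ => g (x + t • v)) = fun t => fderiv ℝ g (x + t • v) v :=
    funext fun t => ((hg1 _).hasFDerivAt.comp_hasDerivAt t (hline t)).deriv
  have hderiv2 : HasDerivAt (fun t : ℝ => fderiv ℝ g (x + t • v) v)
      (fderiv ℝ (fderiv ℝ g) x v v) 0 := by
    have := (hg2 _).hasFDerivAt.comp_hasDerivAt (0 : ℝ) (hline 0)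
    rw [zero_smul, add_zero] at this
    exact (ContinuousLinearMap.apply ℝ ℝ v).hasFDerivAt.comp_hasDerivAt (0 : ℝ) this
  have hmax : IsLocalMax (fun t : ℝ => g (x + t • v)) 0 :=
    IsLocalMax.comp_continuous (by simpa using h) (hline 0).continuousAt
  have := IsLocalMax.deriv_deriv_nonpos hmax (hg1.continuous.comp (by fun_prop)).continuousAt
  rw [hderiv, hderiv2.deriv] at this
  simpa [iteratedFDeriv_two_apply] using this

theorem IsLocalMin.iteratedFDeriv_two_nonneg (h : IsLocalMin g x) (hg : ContDiff ℝ 2 g)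
    (v : E) : 0 ≤ iteratedFDeriv ℝ 2 g x ![v, v] := by
  have := IsLocalMax.iteratedFDeriv_two_nonpos (g := -g) h.neg hg.neg v
  rwa [iteratedFDeriv_neg_apply, neg_apply, neg_nonpos] at this

end SecondOrder

section InnerProduct

variable {E : Type*} [NormedAddCommGroup E] [InnerProductSpace ℝ E]

theorem hasFDerivAt_mul_norm_sub_sq (c : ℝ) (a x : E) :
    HasFDerivAt (fun y => c * ‖y - a‖ ^ 2) ((2 * c) • innerSL ℝ (x - a)) x := by
  refine ((((hasFDerivAt_id x).sub_const a).norm_sq).const_mul c).congr_fderiv ?_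
  ext w
  simp only [FunLike.coe_smul, ContinuousLinearMap.coe_comp, Pi.smul_apply,
    Function.comp_apply, innerSL_apply_apply, smul_eq_mul, id_eq, ContinuousLinearMap.coe_id']
  ring

theorem hasGradientAt_mul_norm_sub_sq [CompleteSpace E] (c : ℝ) (a x : E) :
    HasGradientAt (fun y => c * ‖y - a‖ ^ 2) ((2 * c) • (x - a)) x := by
  rw [hasGradientAt_iff_hasFDerivAt]
  refine (hasFDerivAt_mul_norm_sub_sq c a x).congr_fderiv ?_
  ext w
  simp

theorem contDiff_mul_norm_sub_sq (c : ℝ) (a : E) : ContDiff ℝ 2 fun y => c * ‖y - a‖ ^ 2 :=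
  contDiff_const.mul ((contDiff_id.sub contDiff_const).norm_sq ℝ)

theorem iteratedFDeriv_two_mul_norm_sub_sq (c : ℝ) (a x v w : E) :
    iteratedFDeriv ℝ 2 (fun y => c * ‖y - a‖ ^ 2) x ![v, w] = 2 * c * ⟪v, w⟫ := by
  have hD : fderiv ℝ (fun y => c * ‖y - a‖ ^ 2) = fun y => ((2 * c) • innerSL ℝ) (y - a) :=
    funext fun y => (hasFDerivAt_mul_norm_sub_sq c a y).fderiv
  have hD2 : fderiv ℝ (fun y => ((2 * c) • innerSL ℝ (E := E)) (y - a)) x = (2 * c) • innerSL ℝ :=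
    (((2 * c) • innerSL ℝ).hasFDerivAt.comp x ((hasFDerivAt_id x).sub_const a)).fderiv
  rw [iteratedFDeriv_two_apply, hD, hD2]
  rfl

variable {η : ℝ}

theorem contDiff_mul_sqrt_norm_sub_sq_add_sq (L : ℝ) (hη : η ≠ 0) (z : E) :
    ContDiff ℝ 1 fun y => L * √(‖y - z‖ ^ 2 + η ^ 2) := by
  refine contDiff_const.mul (contDiff_iff_contDiffAt.2 fun y => ?_)
  exact (((contDiff_id.sub contDiff_const).norm_sq ℝ).add contDiff_const).contDiffAt.sqrt
    (by positivity)

theorem hasGradientAt_mul_sqrt_norm_sub_sq_add_sq [CompleteSpace E] (L : ℝ) (hη : η ≠ 0)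
    (z y : E) :
    HasGradientAt (fun y => L * √(‖y - z‖ ^ 2 + η ^ 2))
      ((L / √(‖y - z‖ ^ 2 + η ^ 2)) • (y - z)) y := by
  have hs : 0 < ‖y - z‖ ^ 2 + η ^ 2 := by positivity
  rw [hasGradientAt_iff_hasFDerivAt]
  refine ((((((hasFDerivAt_id y).sub_const z).norm_sq).add_const (η ^ 2)).sqrt hs.ne').const_mul
    L).congr_fderiv ?_
  ext w
  simp only [id_eq, one_div, mul_inv_rev, map_sub, ContinuousLinearMap.comp_id, smul_apply,
    sub_apply, coe_innerSL_apply, nsmul_eq_mul, Nat.cast_ofNat, smul_eq_mul, map_smul,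
    InnerProductSpace.toDual_apply_apply]
  field_simp

theorem half_le_div_sqrt_sq_add_sq_mul {L t : ℝ} (hL : 0 ≤ L) (hη : 0 < η) (ht : η ≤ t) :
    L / 2 ≤ L / √(t ^ 2 + η ^ 2) * t := by
  have ht0 : 0 < t := hη.trans_le ht
  have hsqrt : √(t ^ 2 + η ^ 2) ≤ 2 * t :=
    Real.sqrt_le_iff.2 ⟨by positivity, by nlinarith⟩
  rw [div_mul_eq_mul_div, div_le_div_iff₀ two_pos (by positivity)]
  nlinarith

end InnerProduct

section Laplacian

variable {n : ℕ} {f φ : Em n → ℝ} {x : Em n}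

theorem gradient_eq_of_isLocalExtr_sub (hf : DifferentiableAt ℝ f x)
    (hφ : DifferentiableAt ℝ φ x) (h : IsLocalExtr (fun y => f y - φ y) x) :
    gradient f x = gradient φ x := by
  have h0 := h.fderiv_eq_zero
  rw [fderiv_fun_sub hf hφ, sub_eq_zero] at h0
  rw [gradient, gradient, h0]

theorem lap_fun_sub (hf : ContDiff ℝ 2 f) (hφ : ContDiff ℝ 2 φ) :
    lap (fun y => f y - φ y) x = lap f x - lap φ x := by
  simp only [lap, fun_iteratedFDeriv_sub_apply hf.contDiffAt hφ.contDiffAt,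
    sub_apply, Finset.sum_sub_distrib]

theorem lap_le_of_isLocalMax_sub (hf : ContDiff ℝ 2 f) (hφ : ContDiff ℝ 2 φ)
    (h : IsLocalMax (fun y => f y - φ y) x) : lap f x ≤ lap φ x := by
  have : lap (fun y => f y - φ y) x ≤ 0 :=
    Finset.sum_nonpos fun i _ => h.iteratedFDeriv_two_nonpos (hf.sub hφ) _
  linarith [lap_fun_sub (x := x) hf hφ]

theorem lap_ge_of_isLocalMin_sub (hf : ContDiff ℝ 2 f) (hφ : ContDiff ℝ 2 φ)
    (h : IsLocalMin (fun y => f y - φ y) x) : lap φ x ≤ lap f x := by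
  have : 0 ≤ lap (fun y => f y - φ y) x :=
    Finset.sum_nonneg fun i _ => h.iteratedFDeriv_two_nonneg (hf.sub hφ) _
  linarith [lap_fun_sub (x := x) hf hφ]

theorem lap_mul_norm_sub_sq (c : ℝ) (a x : Em n) :
    lap (fun y => c * ‖y - a‖ ^ 2) x = 2 * c * n := by
  simp [lap, iteratedFDeriv_two_mul_norm_sub_sq, mul_comm]

end Laplacian

section Periodic

variable {n : ℕ}

def closedUnitCube (n : ℕ) : Set (Em n) := WithLp.toLp 2 '' Set.Icc 0 1

theorem isCompact_closedUnitCube : IsCompact (closedUnitCube n) :=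
  isCompact_Icc.image (PiLp.continuous_toLp 2 _)

theorem exists_add_intVec_mem_closedUnitCube (x : Em n) :
    ∃ k, x + intVec k ∈ closedUnitCube n := by
  refine ⟨fun i => -⌊x i⌋, fun i => Int.fract (x i),
    ⟨fun i => Int.fract_nonneg _, fun i => (Int.fract_lt_one _).le⟩, ?_⟩
  ext i
  simp [intVec, Int.fract, sub_eq_add_neg]

theorem exists_forall_ge_of_periodic_fst {Y : Type*} [TopologicalSpace Y] {F : Em n × Y → ℝ}
    (hF : Continuous F) (hper : ∀ x k w, F (x + intVec k, w) = F (x, w)) {S : Set Y}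
    (hS : IsCompact S) (hne : S.Nonempty) :
    ∃ x₀, ∃ w₀ ∈ S, ∀ x, ∀ w ∈ S, F (x, w) ≤ F (x₀, w₀) := by
  have hQ : (closedUnitCube n ×ˢ S).Nonempty :=
    ⟨(WithLp.toLp 2 0, hne.some), ⟨0, ⟨le_rfl, zero_le_one⟩, rfl⟩, hne.some_mem⟩
  obtain ⟨⟨x₀, w₀⟩, ⟨-, hw₀⟩, hmax⟩ :=
    (isCompact_closedUnitCube.prod hS).exists_isMaxOn hQ hF.continuousOn
  refine ⟨x₀, w₀, hw₀, fun x w hw => ?_⟩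
  obtain ⟨k, hk⟩ := exists_add_intVec_mem_closedUnitCube x
  rw [← hper x k w]
  exact hmax (Set.mk_mem_prod hk hw)

theorem ZPeriodic.exists_forall_ge {u : Em n → ℝ} (hp : ZPeriodic u) (hc : Continuous u) :
    ∃ x₀, ∀ x, u x ≤ u x₀ := by
  obtain ⟨x₀, _, -, h⟩ := exists_forall_ge_of_periodic_fst (F := fun q : Em n × Unit => u q.1)
    (by fun_prop) (fun x k _ => hp x k) isCompact_univ Set.univ_nonempty
  exact ⟨x₀, fun x => h x () trivial⟩

theorem ZPeriodic.exists_forall_le {u : Em n → ℝ} (hp : ZPeriodic u) (hc : Continuous u) :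
    ∃ x₀, ∀ x, u x₀ ≤ u x := by
  obtain ⟨x₀, h⟩ := ZPeriodic.exists_forall_ge (u := -u) (fun x k => by simp [hp x k]) hc.neg
  exact ⟨x₀, fun x => neg_le_neg_iff.1 (h x)⟩

theorem exists_forall_doubling_le {f g : Em n → ℝ} (hf : Continuous f) (hfp : ZPeriodic f)
    (hg : Continuous g) (hgp : ZPeriodic g) {c : ℝ} (hc : 0 < c) :
    ∃ x₁ y₁, ∀ x y, f x - g y - c * ‖x - y‖ ^ 2 ≤ f x₁ - g y₁ - c * ‖x₁ - y₁‖ ^ 2 := by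
  obtain ⟨xf, hxf⟩ := hfp.exists_forall_ge hf
  obtain ⟨yg, hyg⟩ := hgp.exists_forall_le hg
  -- substitute `y = x - w`: the new function is periodic in `x` and small for large `w`
  set G : Em n × Em n → ℝ := fun q => f q.1 - g (q.1 - q.2) - c * ‖q.2‖ ^ 2 with hG
  have hGper : ∀ x k w, G (x + intVec k, w) = G (x, w) := fun x k w => by
    simp only [hG, hfp x k, add_sub_right_comm, hgp (x - w)]
  set R := √((f xf - g yg - (f 0 - g 0)) / c)
  have hR : c * R ^ 2 = f xf - g yg - (f 0 - g 0) := by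
    rw [Real.sq_sqrt (div_nonneg (by linarith [hxf 0, hyg 0]) hc.le)]
    field_simp
  obtain ⟨x₀, w₀, -, hmax⟩ := exists_forall_ge_of_periodic_fst (F := G) (by fun_prop) hGper
    (isCompact_closedBall 0 R) ⟨0, by simp [R]⟩
  have hGmax : ∀ x w, G (x, w) ≤ G (x₀, w₀) := by
    intro x w
    by_cases hw : ‖w‖ ≤ R
    · exact hmax x w (mem_closedBall_zero_iff.2 hw)
    · have h0 := hmax 0 0 (by simp [R])
      have hRw : c * R ^ 2 ≤ c * ‖w‖ ^ 2 := by gcongr; exact (not_le.1 hw).le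
      simp only [hG, sub_zero, norm_zero] at h0 ⊢
      linarith [hxf x, hyg (x - w)]
  refine ⟨x₀, x₀ - w₀, fun x y => ?_⟩
  simpa [hG] using hGmax x (x - y)

end Periodic

section Tonelli

variable {n : ℕ} {H : Em n × Em n → ℝ}

theorem Tonelli.exists_forall_le_zero (hH : Tonelli H) : ∃ C₀, ∀ x, H (x, 0) ≤ C₀ := by
  obtain ⟨x₀, h⟩ := ZPeriodic.exists_forall_ge (u := fun x => H (x, 0))
    (fun x k => hH.periodic x 0 k) (hH.smooth.continuous.comp (by fun_prop))
  exact ⟨_, h⟩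

theorem Tonelli.exists_lt_of_le_norm (hH : Tonelli H) (C : ℝ) :
    ∃ R : ℝ≥0, 0 < R ∧ ∀ x p, R ≤ ‖p‖ → C < H (x, p) := by
  obtain ⟨R, hR⟩ := hH.superlinear (|C| + 1)
  refine ⟨⟨max R 1, by positivity⟩, NNReal.coe_pos.1 (lt_max_of_lt_right one_pos),
    fun x p hp => ?_⟩
  have hp1 : 1 ≤ ‖p‖ := le_trans (le_max_right R 1) hp
  calc C < |C| + 1 := by linarith [le_abs_self C]
    _ ≤ (|C| + 1) * ‖p‖ := le_mul_of_one_le_right (by positivity) hp1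
    _ ≤ H (x, p) := hR x p (le_trans (le_max_left R 1) hp)

theorem Tonelli.exists_lipschitzWith_fst (hH : Tonelli H) (R : ℝ) :
    ∃ M : ℝ≥0, ∀ p, ‖p‖ ≤ R → LipschitzWith M fun x => H (x, p) := by
  have hd : Differentiable ℝ H := hH.smooth.differentiable two_ne_zero
  have hper : ∀ x k w, ‖fderiv ℝ H (x + intVec k, w)‖ = ‖fderiv ℝ H (x, w)‖ := by
    intro x k w
    have hshift : (fun q => H (q + (intVec k, 0))) = H :=
      funext fun q => by
        rw [show q + (intVec k, 0) = (q.1 + intVec k, q.2) by ext <;> simp]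
        exact hH.periodic q.1 q.2 k
    rw [show (x + intVec k, w) = (x, w) + (intVec k, 0) by simp, ← fderiv_comp_add_right,
      hshift]
  obtain ⟨x₀, w₀, -, hmax⟩ := exists_forall_ge_of_periodic_fst
    (hH.smooth.continuous_fderiv two_ne_zero).norm hper (isCompact_closedBall 0 |R|)
    ⟨0, by simp⟩
  refine ⟨‖fderiv ℝ H (x₀, w₀)‖₊, fun p hp => lipschitzWith_of_nnnorm_fderiv_le
    (fun x => (hd _).comp x (hasFDerivAt_prodMk_left x p).differentiableAt) fun x => ?_⟩
  have hx : HasFDerivAt (fun x => H (x, p))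
      ((fderiv ℝ H (x, p)).comp (ContinuousLinearMap.inl ℝ _ _)) x :=
    (hd _).hasFDerivAt.comp x (hasFDerivAt_prodMk_left x p)
  rw [hx.fderiv, ← NNReal.coe_le_coe, coe_nnnorm, coe_nnnorm]
  calc ‖(fderiv ℝ H (x, p)).comp (ContinuousLinearMap.inl ℝ _ _)‖
      ≤ ‖fderiv ℝ H (x, p)‖ * ‖ContinuousLinearMap.inl ℝ (Em n) (Em n)‖ :=
        ContinuousLinearMap.opNorm_comp_le _ _
    _ ≤ ‖fderiv ℝ H (x₀, w₀)‖ * 1 := by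
        gcongr
        · exact hmax x p (mem_closedBall_zero_iff.2 (hp.trans (le_abs_self R)))
        · exact ContinuousLinearMap.norm_inl_le_one ℝ _ _
    _ = ‖fderiv ℝ H (x₀, w₀)‖ := mul_one _

end Tonelli

section Viscosity

variable {n : ℕ} {H : Em n × Em n → ℝ} {lam : ℝ} {u : Em n → ℝ}

theorem ViscositySol.neg_le_lam_mul (hu : ViscositySol H lam u) (hlam : 0 ≤ lam) {C₀ : ℝ}
    (hC₀ : ∀ x, H (x, 0) ≤ C₀) (x : Em n) : -C₀ ≤ lam * u x := by
  obtain ⟨xm, hxm⟩ := hu.2.1.exists_forall_le hu.1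
  have hsuper := (hu.2.2 (fun _ => 0) contDiff_const).2 xm
    (Filter.Eventually.of_forall fun y => by simpa using hxm y)
  rw [gradient_fun_const] at hsuper
  nlinarith [hC₀ xm, mul_le_mul_of_nonneg_left (hxm x) hlam]

/-- Outside the `η`-ball around `z` the cone `2R √(‖y - z‖² + η²)` has gradient of norm `≥ R`,
where `H > C₀ ≥ -λu` rules out the subsolution inequality; so `u` minus the cone attains its
maximum inside that ball. -/
theorem ViscositySol.exists_dist_lt_sub_le (hu : ViscositySol H lam u) {C₀ : ℝ}
    (hlow : ∀ x, -C₀ ≤ lam * u x) {R : ℝ≥0} (hR0 : 0 < R)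
    (hR : ∀ x p, R ≤ ‖p‖ → C₀ < H (x, p)) (x z : Em n) {η : ℝ} (hη : 0 < η) :
    ∃ y, ‖y - z‖ < η ∧ u x - 2 * R * (‖x - z‖ + η) ≤ u y := by
  set ψ : Em n → ℝ := fun y => 2 * R * √(‖y - z‖ ^ 2 + η ^ 2) with hψ
  have hψ_ge : ∀ y, 2 * R * ‖y - z‖ ≤ ψ y := fun y => by
    simp only [hψ]
    gcongr
    exact Real.le_sqrt_of_sq_le (by nlinarith)
  have hψ_le : ψ x ≤ 2 * R * (‖x - z‖ + η) := by
    simp only [hψ]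
    gcongr
    exact Real.sqrt_le_iff.2 ⟨by positivity, by nlinarith [norm_nonneg (x - z)]⟩
  have hψc := contDiff_mul_sqrt_norm_sub_sq_add_sq (2 * R) hη.ne' z
  obtain ⟨B, hB⟩ := hu.2.1.exists_forall_ge hu.1
  obtain ⟨y, hy⟩ : ∃ y, ∀ y', u y' - ψ y' ≤ u y - ψ y := by
    refine Continuous.exists_forall_ge' (f := fun y => u y - ψ y)
      (hu.1.sub hψc.continuous) z ?_
    filter_upwards [tendsto_norm_cocompact_atTop.eventually_ge_atTop
      (‖z‖ + (u B - u z + ψ z) / (2 * R))] with y' hy'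
    have h1 : (u B - u z + ψ z) / (2 * R) ≤ ‖y' - z‖ := by
      linarith [norm_sub_norm_le y' z]
    rw [div_le_iff₀ (by positivity)] at h1
    linarith [hB y', hψ_ge y']
  have hsub := (hu.2.2 ψ hψc).1 y (Filter.Eventually.of_forall hy)
  rw [(hasGradientAt_mul_sqrt_norm_sub_sq_add_sq (2 * R) hη.ne' z y).gradient] at hsub
  have hψy : 0 ≤ ψ y := (mul_nonneg (by positivity) (norm_nonneg _)).trans (hψ_ge y)
  refine ⟨y, lt_of_not_ge fun hyz => ?_, by linarith [hy x]⟩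
  refine (hR y _ ?_).not_ge (by linarith [hlow y])
  rw [norm_smul, Real.norm_eq_abs, abs_of_nonneg (by positivity)]
  simpa using half_le_div_sqrt_sq_add_sq_mul (L := 2 * R) (by positivity) hη hyz

theorem ViscositySol.lipschitzWith (hu : ViscositySol H lam u) {C₀ : ℝ}
    (hlow : ∀ x, -C₀ ≤ lam * u x) {R : ℝ≥0} (hR0 : 0 < R)
    (hR : ∀ x p, R ≤ ‖p‖ → C₀ < H (x, p)) : LipschitzWith (2 * R) u := by
  refine LipschitzWith.of_le_add_mul _ fun x z => le_of_forall_pos_le_add fun ε hε => ?_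
  obtain ⟨δ, hδ, hball⟩ := Metric.continuousAt_iff.1 hu.1.continuousAt (ε / 2) (half_pos hε)
  set η := min δ (ε / (4 * R))
  have hη : 0 < η := lt_min hδ (by positivity)
  have hRη : 2 * R * η ≤ ε / 2 := by
    have := min_le_right δ (ε / (4 * R))
    rw [le_div_iff₀ (by positivity)] at this
    linarith
  obtain ⟨y, hyz, hxy⟩ := hu.exists_dist_lt_sub_le hlow hR0 hR x z hη
  have hy : u y < u z + ε / 2 := by
    have := hball (lt_of_lt_of_le (dist_eq_norm y z ▸ hyz) (min_le_left _ _))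
    linarith [(abs_lt.1 (Real.dist_eq _ _ ▸ this)).2]
  push_cast
  rw [dist_eq_norm]
  linarith

end Viscosity

section QuadraticTests

variable {n : ℕ} {H : Em n × Em n → ℝ} {lam eps : ℝ} {u : Em n → ℝ}

/-- The viscosity inequalities of `λu + H(x, Du) = 0`, tested only with paraboloids `c‖· - a‖²`
and relaxed by `e * c`; this is what a classical solution of the viscous equation satisfies. -/
def QuadSubsolution (H : Em n × Em n → ℝ) (lam e : ℝ) (u : Em n → ℝ) : Prop :=
  ∀ c a x, IsLocalMax (fun y => u y - c * ‖y - a‖ ^ 2) x →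
    lam * u x + H (x, (2 * c) • (x - a)) ≤ e * c

def QuadSupersolution (H : Em n × Em n → ℝ) (lam e : ℝ) (u : Em n → ℝ) : Prop :=
  ∀ c a x, IsLocalMin (fun y => u y + c * ‖y - a‖ ^ 2) x →
    -(e * c) ≤ lam * u x + H (x, (2 * c) • (a - x))

theorem isLocalMin_add_iff_sub_neg {c : ℝ} {a x : Em n} :
    IsLocalMin (fun y => u y + c * ‖y - a‖ ^ 2) x ↔
      IsLocalMin (fun y => u y - (-c) * ‖y - a‖ ^ 2) x := by
  simp only [neg_mul, sub_neg_eq_add]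

theorem two_mul_neg_smul_sub {E : Type*} [AddCommGroup E] [Module ℝ E] (c : ℝ) (a x : E) :
    (2 * -c) • (x - a) = (2 * c) • (a - x) := by
  module

theorem ViscositySol.quadSubsolution (hu : ViscositySol H lam u) : QuadSubsolution H lam 0 u :=
  fun c a x h => by
    simpa [(hasGradientAt_mul_norm_sub_sq c a x).gradient] using
      (hu.2.2 _ ((contDiff_mul_norm_sub_sq c a).of_le one_le_two)).1 x h

theorem ViscositySol.quadSupersolution (hu : ViscositySol H lam u) :
    QuadSupersolution H lam 0 u := fun c a x h => by
  have := (hu.2.2 _ ((contDiff_mul_norm_sub_sq (-c) a).of_le one_le_two)).2 x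
    (isLocalMin_add_iff_sub_neg.1 h)
  rw [(hasGradientAt_mul_norm_sub_sq (-c) a x).gradient, two_mul_neg_smul_sub] at this
  rwa [zero_mul, neg_zero]

theorem ClassicalSol.quadSubsolution (hu : ClassicalSol H lam eps u) (heps : 0 ≤ eps) :
    QuadSubsolution H lam (2 * n * eps) u := fun c a x h => by
  have hq := contDiff_mul_norm_sub_sq c a
  have hgrad := gradient_eq_of_isLocalExtr_sub ((hu.1.differentiable two_ne_zero) x)
    ((hq.differentiable two_ne_zero) x) (IsMaxFilter.isExtr h)
  have hlap := lap_le_of_isLocalMax_sub hu.1 hq h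
  rw [(hasGradientAt_mul_norm_sub_sq c a x).gradient] at hgrad
  rw [lap_mul_norm_sub_sq] at hlap
  rw [← hgrad, hu.2.2 x]
  nlinarith

theorem ClassicalSol.quadSupersolution (hu : ClassicalSol H lam eps u) (heps : 0 ≤ eps) :
    QuadSupersolution H lam (2 * n * eps) u := fun c a x h => by
  have hq := contDiff_mul_norm_sub_sq (-c) a
  rw [isLocalMin_add_iff_sub_neg] at h
  have hgrad := gradient_eq_of_isLocalExtr_sub ((hu.1.differentiable two_ne_zero) x)
    ((hq.differentiable two_ne_zero) x) (IsMinFilter.isExtr h)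
  have hlap := lap_ge_of_isLocalMin_sub hu.1 hq h
  rw [(hasGradientAt_mul_norm_sub_sq (-c) a x).gradient, two_mul_neg_smul_sub] at hgrad
  rw [lap_mul_norm_sub_sq] at hlap
  rw [← hgrad, hu.2.2 x]
  nlinarith

theorem mul_norm_sub_le_of_forall_doubling_le {u v : Em n → ℝ} {c : ℝ} {K : ℝ≥0}
    (hlip : LipschitzWith K u ∨ LipschitzWith K v) {x₁ y₁ : Em n}
    (hmax : ∀ x y, u x - v y - c * ‖x - y‖ ^ 2 ≤ u x₁ - v y₁ - c * ‖x₁ - y₁‖ ^ 2) :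
    c * ‖x₁ - y₁‖ ≤ K := by
  have hquad : c * ‖x₁ - y₁‖ * ‖x₁ - y₁‖ ≤ K * ‖x₁ - y₁‖ := by
    rcases hlip with h | h
    · have hdiag := hmax y₁ y₁
      simp only [sub_self, norm_zero] at hdiag
      nlinarith [dist_eq_norm x₁ y₁ ▸ h.le_add_mul x₁ y₁]
    · have hdiag := hmax x₁ x₁
      simp only [sub_self, norm_zero] at hdiag
      nlinarith [dist_eq_norm x₁ y₁ ▸ h.le_add_mul x₁ y₁]
  rcases (norm_nonneg (x₁ - y₁)).eq_or_lt with h0 | hpos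
  · rw [← h0, mul_zero]; exact K.2
  · exact le_of_mul_le_mul_right hquad hpos

theorem QuadSubsolution.lam_mul_sub_le {e₁ e₂ c : ℝ} {K M : ℝ≥0} {v : Em n → ℝ}
    (hu : QuadSubsolution H lam e₁ u) (hv : QuadSupersolution H lam e₂ v)
    (huc : Continuous u) (hup : ZPeriodic u) (hvc : Continuous v) (hvp : ZPeriodic v)
    (hlip : LipschitzWith K u ∨ LipschitzWith K v)
    (hM : ∀ p, ‖p‖ ≤ 2 * K → LipschitzWith M fun x => H (x, p))
    (hlam : 0 ≤ lam) (hc : 0 < c) (x : Em n) :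
    lam * (u x - v x) ≤ (e₁ + e₂) * c + M * K / c := by
  obtain ⟨x₁, y₁, hmax⟩ := exists_forall_doubling_le huc hup hvc hvp hc
  have hdist : ‖y₁ - x₁‖ ≤ K / c := by
    rw [norm_sub_rev, le_div_iff₀ hc, mul_comm]
    exact mul_norm_sub_le_of_forall_doubling_le hlip hmax
  set p := (2 * c) • (x₁ - y₁)
  have hp : ‖p‖ ≤ 2 * K := by
    rw [norm_smul, Real.norm_of_nonneg (by positivity), mul_assoc]
    gcongr
    exact mul_norm_sub_le_of_forall_doubling_le hlip hmax
  have hsub := hu c y₁ x₁ (Filter.Eventually.of_forall fun y => by linarith [hmax y y₁])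
  have hsuper := hv c x₁ y₁ (Filter.Eventually.of_forall fun y => by
    have := hmax x₁ y
    rw [norm_sub_rev x₁ y, norm_sub_rev x₁ y₁] at this
    linarith)
  have hH : H (y₁, p) ≤ H (x₁, p) + M * (K / c) := by
    have := (hM p hp).le_add_mul y₁ x₁
    rw [dist_eq_norm] at this
    nlinarith [M.2]
  have hx : u x - v x ≤ u x₁ - v y₁ := by
    have := hmax x x
    simp only [sub_self, norm_zero] at this
    nlinarith [sq_nonneg ‖x₁ - y₁‖]
  calc lam * (u x - v x) ≤ lam * (u x₁ - v y₁) := mul_le_mul_of_nonneg_left hx hlam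
    _ ≤ (e₁ + e₂) * c + M * K / c := by rw [mul_div_assoc]; linarith

end QuadraticTests

theorem viscous_discount_sqrt_estimate_general
    (n : ℕ) (H : Em n × Em n → ℝ) (hH : Tonelli H) :
    ∃ C₄ : ℝ, 0 < C₄ ∧ ∀ lam eps : ℝ, lam ∈ Set.Ioc (0:ℝ) 1 → eps ∈ Set.Ioc (0:ℝ) 1 →
      ∀ uve ulam : Em n → ℝ, ClassicalSol H lam eps uve → ViscositySol H lam ulam →
        ∀ x : Em n, |uve x - ulam x| ≤ C₄ * Real.sqrt eps / lam := by
  obtain ⟨C₀, hC₀⟩ := hH.exists_forall_le_zero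
  obtain ⟨R, hR0, hR⟩ := hH.exists_lt_of_le_norm C₀
  set K : ℝ≥0 := 2 * R
  obtain ⟨M, hM⟩ := hH.exists_lipschitzWith_fst (2 * K)
  refine ⟨2 * n + M * K + 1, by positivity, ?_⟩
  rintro lam eps ⟨hlam, -⟩ ⟨heps, -⟩ uve ulam huve hulam x
  have hlip : LipschitzWith K ulam :=
    hulam.lipschitzWith (hulam.neg_le_lam_mul hlam.le hC₀) hR0 hR
  have hδ : 0 < √eps := Real.sqrt_pos.2 heps
  -- paraboloids of opening `c = 1/√ε` balance the viscous error `2nε c` against `MK/c`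
  have hc : 2 * n * eps * (√eps)⁻¹ + M * K / (√eps)⁻¹ = (2 * n + M * K) * √eps := by
    field_simp
    rw [Real.sq_sqrt heps.le]
    ring
  have h₁ := (huve.quadSubsolution heps.le).lam_mul_sub_le hulam.quadSupersolution
    huve.1.continuous huve.2.1 hulam.1 hulam.2.1 (Or.inr hlip) hM hlam.le (inv_pos.2 hδ) x
  have h₂ := hulam.quadSubsolution.lam_mul_sub_le (huve.quadSupersolution heps.le)
    hulam.1 hulam.2.1 huve.1.continuous huve.2.1 (Or.inl hlip) hM hlam.le (inv_pos.2 hδ) x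
  rw [add_zero] at h₁
  rw [zero_add] at h₂
  rw [le_div_iff₀ hlam, ← abs_of_pos hlam, ← abs_mul, abs_le]
  constructor <;> nlinarith

theorem viscous_discount_sqrt_estimate
    (n : ℕ) (hn : 1 ≤ n) (H : Em n × Em n → ℝ) (hH : Tonelli H) :
    ∃ C₄ : ℝ, 0 < C₄ ∧ ∀ lam eps : ℝ, lam ∈ Set.Ioc (0:ℝ) 1 → eps ∈ Set.Ioc (0:ℝ) 1 →
      ∀ uve ulam : Em n → ℝ, ClassicalSol H lam eps uve → ViscositySol H lam ulam →
        ∀ x : Em n, |uve x - ulam x| ≤ C₄ * Real.sqrt eps / lam :=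
  viscous_discount_sqrt_estimate_general n H hH
end
end
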